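/- arXiv:1801.06911 — 5 statements merged into one kernel-verified Lean document; each statement's English description precedes it below -/
import Mathlib

section
/- Let A be a left brace and B an A-module (satisfying (M1)-(M3)). Then the abelian group A ⊕ B with multiplication (a₁,b₁)·(a₂,b₂) := (a₁·a₂, a₁·b₂) is a left brace (the semidirect product A ⋉ B). -/
/-!
The circle operation `a ∘ b = a + b + a·b` makes a left brace a group (the inverse of `a` is
the solution of `a·x + x = -a`), and (M3) says precisely that `a ↦ (y ↦ a·y + y)` turns `∘`
into composition. Together with (M1) this makes every `y ↦ a·y + y` on `B` invertible, which is
the only brace axiom of `A ⋉ B` not checked componentwise.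
-/

/-- A left brace multiplication on an additive abelian group. -/
structure LeftBraceMul (A : Type*) [AddCommGroup A] where
  mul : A → A → A
  add_distrib : ∀ a b c : A, mul a (b + c) = mul a b + mul a c
  comp : ∀ a b c : A, mul (mul a b + a + b) c = mul a (mul b c) + mul a c + mul b c
  bij : ∀ a : A, Function.Bijective (fun x => mul a x + x)

namespace LeftBraceMul

variable {A : Type*} [AddCommGroup A] (Br : LeftBraceMul A)

theorem mul_zero (a : A) : Br.mul a 0 = 0 := by
  have h := Br.add_distrib a 0 0
  rw [add_zero] at h
  exact left_eq_add.mp h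

theorem zero_mul (c : A) : Br.mul 0 c = 0 := by
  have h := Br.comp 0 0 c
  rw [mul_zero, add_zero, add_zero, eq_comm, add_eq_right] at h
  apply (Br.bij 0).1
  change Br.mul 0 (Br.mul 0 c) + Br.mul 0 c = Br.mul 0 0 + 0
  rw [h, mul_zero, add_zero]

def circ (a b : A) : A := a + b + Br.mul a b

theorem circ_assoc (a b c : A) : Br.circ (Br.circ a b) c = Br.circ a (Br.circ b c) := by
  unfold circ
  rw [show a + b + Br.mul a b = Br.mul a b + a + b by abel, Br.comp,
    Br.add_distrib, Br.add_distrib]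
  abel

theorem circ_zero (a : A) : Br.circ a 0 = a := by
  simp only [circ, mul_zero, add_zero]

theorem zero_circ (a : A) : Br.circ 0 a = a := by
  simp only [circ, zero_mul, add_zero, zero_add]

theorem exists_circ_eq_zero (a : A) : ∃ x, Br.circ a x = 0 := by
  obtain ⟨x, hx : Br.mul a x + x = -a⟩ := (Br.bij a).2 (-a)
  refine ⟨x, ?_⟩
  rw [circ, add_assoc, add_comm x, hx, add_neg_cancel]

theorem exists_circ_inv (a : A) : ∃ x, Br.circ a x = 0 ∧ Br.circ x a = 0 := by
  obtain ⟨x, hax⟩ := Br.exists_circ_eq_zero a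
  obtain ⟨y, hxy⟩ := Br.exists_circ_eq_zero x
  have hya : y = a := by
    have h := Br.circ_assoc a x y
    rwa [hax, zero_circ, hxy, circ_zero] at h
  exact ⟨x, hax, hya ▸ hxy⟩

section Module

variable {B : Type*} [AddCommGroup B] {smul : A → B → B}

theorem smul_add_self_circ
    (smul_add : ∀ a : A, ∀ x y : B, smul a (x + y) = smul a x + smul a y)
    (circ_smul : ∀ a b : A, ∀ x : B,
      smul (Br.circ a b) x = smul a x + smul b x + smul a (smul b x))
    (a b : A) (y : B) :
    smul (Br.circ a b) y + y = smul a (smul b y + y) + (smul b y + y) := by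
  rw [smul_add, circ_smul]
  abel

theorem bijective_smul_add_self (zero_smul : ∀ x : B, smul 0 x = 0)
    (smul_add : ∀ a : A, ∀ x y : B, smul a (x + y) = smul a x + smul a y)
    (circ_smul : ∀ a b : A, ∀ x : B,
      smul (Br.circ a b) x = smul a x + smul b x + smul a (smul b x))
    (a : A) : Function.Bijective (fun y : B => smul a y + y) := by
  obtain ⟨x, hax, hxa⟩ := Br.exists_circ_inv a
  have inverse_of_circ_eq_zero {a b : A} (h : Br.circ a b = 0) (y : B) :
      smul a (smul b y + y) + (smul b y + y) = y := by
    rw [← Br.smul_add_self_circ smul_add circ_smul, h, zero_smul, zero_add]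
  exact Function.bijective_iff_has_inverse.mpr
    ⟨fun y => smul x y + y, inverse_of_circ_eq_zero hxa, inverse_of_circ_eq_zero hax⟩

def semidirect (zero_smul : ∀ x : B, smul 0 x = 0)
    (smul_add : ∀ a : A, ∀ x y : B, smul a (x + y) = smul a x + smul a y)
    (circ_smul : ∀ a b : A, ∀ x : B,
      smul (Br.circ a b) x = smul a x + smul b x + smul a (smul b x)) :
    LeftBraceMul (A × B) where
  mul p q := (Br.mul p.1 q.1, smul p.1 q.2)
  add_distrib p q r := Prod.ext (Br.add_distrib p.1 q.1 r.1) (smul_add p.1 q.2 r.2)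
  comp p q r := by
    refine Prod.ext (Br.comp p.1 q.1 r.1) ?_
    change smul (Br.mul p.1 q.1 + p.1 + q.1) r.2 =
      smul p.1 (smul q.1 r.2) + smul p.1 r.2 + smul q.1 r.2
    rw [show Br.mul p.1 q.1 + p.1 + q.1 = Br.circ p.1 q.1 by unfold circ; abel, circ_smul]
    abel
  bij p := (Br.bij p.1).prodMap (Br.bijective_smul_add_self zero_smul smul_add circ_smul p.1)

end Module

end LeftBraceMul

/-- The semidirect product A ⋉ B of a left brace A with an A-module B is a
left brace. -/
theorem stmt_8 {A : Type*} [AddCommGroup A] (Br : LeftBraceMul A)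
    {B : Type*} [AddCommGroup B] (smul : A → B → B)
    (M1 : ∀ x : B, smul 0 x = 0)
    (M2 : ∀ a : A, ∀ x y : B, smul a (x + y) = smul a x + smul a y)
    (M3 : ∀ a b : A, ∀ x : B,
      smul (a + b + Br.mul a b) x = smul a x + smul b x + smul a (smul b x)) :
    ∃ S : LeftBraceMul (A × B),
      ∀ p q : A × B, S.mul p q = (Br.mul p.1 q.1, smul p.1 q.2) :=
  ⟨Br.semidirect M1 M2 M3, fun _ _ => rfl⟩
end

section
/- Let p be a prime and let B^{p,p} be the left brace (ℤ/p)² with multiplication (x₁,y₁)·(x₂,y₂) = (y₁y₂,0). A group automorphism of (ℤ/p)² given by an invertible matrix [[a,b],[c,d]] is a brace automorphism of B^{p,p} if and only if c = 0 and a = d². -/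
/-! Testing the multiplicativity on `u = v = (0, 1)` already forces `(a, c) = (d², 0)`, and
conversely for the upper triangular matrix `[[d², b], [0, d]]` both sides at `(u, v)` equal
`(d² u.2 v.2, 0)`. -/

namespace BraceBpp

variable {R : Type*} [CommRing R]

def mul (u v : R × R) : R × R := (u.2 * v.2, 0)

def matrixEnd (a b c d : R) (w : R × R) : R × R := (a * w.1 + b * w.2, c * w.1 + d * w.2)

theorem matrixEnd_map_mul_iff (a b c d : R) :
    (∀ u v : R × R,
        matrixEnd a b c d (mul u v) = mul (matrixEnd a b c d u) (matrixEnd a b c d v)) ↔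
      c = 0 ∧ a = d ^ 2 := by
  constructor
  · intro h
    have h₀₁ : (a, c) = (d * d, 0) := by simpa [matrixEnd, mul] using h (0, 1) (0, 1)
    obtain ⟨ha, hc⟩ := Prod.mk.inj h₀₁
    exact ⟨hc, ha.trans (sq d).symm⟩
  · rintro ⟨rfl, rfl⟩ u v
    simp only [matrixEnd, mul, zero_mul, zero_add, mul_zero, add_zero, Prod.mk.injEq, and_true]
    ring

end BraceBpp

theorem stmt_11_general (p : ℕ) (a b c d : ZMod p) :
    (∀ u v : ZMod p × ZMod p,
      ((fun w : ZMod p × ZMod p => (a * w.1 + b * w.2, c * w.1 + d * w.2))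
          ((u.2 * v.2, 0)) =
        (((c * u.1 + d * u.2) * (c * v.1 + d * v.2)), (0 : ZMod p)))) ↔
    (c = 0 ∧ a = d ^ 2) :=
  BraceBpp.matrixEnd_map_mul_iff a b c d

/-- An invertible matrix [[a,b],[c,d]] gives a brace automorphism of B^{p,p}
iff c = 0 and a = d². -/
theorem stmt_11 (p : ℕ) (hp : p.Prime) (a b c d : ZMod p)
    (hinv : IsUnit (a * d - b * c)) :
    (∀ u v : ZMod p × ZMod p,
      ((fun w : ZMod p × ZMod p => (a * w.1 + b * w.2, c * w.1 + d * w.2))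
          ((u.2 * v.2, 0)) =
        (((c * u.1 + d * u.2) * (c * v.1 + d * v.2)), (0 : ZMod p)))) ↔
    (c = 0 ∧ a = d ^ 2) :=
  stmt_11_general p a b c d
end

section
/- Let p be a prime and B^{p²} the left brace ℤ/p² with multiplication x₁·x₂ = p·x₁·x₂. An additive automorphism of ℤ/p², given by multiplication by a unit u ∈ (ℤ/p²)ˣ, is a brace automorphism of B^{p²} if and only if u ≡ 1 (mod p). -/
theorem Units.forall_mul_scaledMul_iff {R : Type*} [CommRing R] (u : Rˣ) (c : R) :
    (∀ x y : R, (u : R) * (c * x * y) = c * ((u : R) * x) * ((u : R) * y)) ↔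
      c * ((u : R) - 1) = 0 := by
  constructor
  · intro h
    have hone : (u : R) * c = c * (u : R) * (u : R) := by simpa using h 1 1
    linear_combination -(↑u⁻¹ : R) * hone - c * ((u : R) - 1) * u.mul_inv
  · intro h x y
    have hcu : c * (u : R) = c := by linear_combination h
    linear_combination -(x * y * (u : R)) * hcu

theorem ZMod.natCast_mul_eq_zero_iff_castHom_eq_zero {n : ℕ} (hn : n ≠ 0) (x : ZMod (n ^ 2)) :
    (n : ZMod (n ^ 2)) * x = 0 ↔
      ZMod.castHom (dvd_pow_self n two_ne_zero) (ZMod n) x = 0 := by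
  have : NeZero (n ^ 2) := ⟨pow_ne_zero 2 hn⟩
  obtain ⟨m, rfl⟩ : ∃ m : ℕ, (m : ZMod (n ^ 2)) = x := ⟨x.val, ZMod.natCast_zmod_val x⟩
  rw [map_natCast, ← Nat.cast_mul, ZMod.natCast_eq_zero_iff, ZMod.natCast_eq_zero_iff, pow_two,
    Nat.mul_dvd_mul_iff_left (Nat.pos_of_ne_zero hn)]

/-- Multiplication by a unit u of ℤ/p² is a brace automorphism of B^{p²}
iff u ≡ 1 (mod p). -/
theorem stmt_12 (p : ℕ) (hp : p.Prime) (u : (ZMod (p ^ 2))ˣ) :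
    (∀ x y : ZMod (p ^ 2),
      (u : ZMod (p ^ 2)) * ((p : ZMod (p ^ 2)) * x * y)
        = (p : ZMod (p ^ 2)) * ((u : ZMod (p ^ 2)) * x) * ((u : ZMod (p ^ 2)) * y)) ↔
    ZMod.castHom (dvd_pow_self p two_ne_zero) (ZMod p) (u : ZMod (p ^ 2)) = 1 := by
  rw [u.forall_mul_scaledMul_iff, ZMod.natCast_mul_eq_zero_iff_castHom_eq_zero hp.ne_zero,
    map_sub, map_one, sub_eq_zero]
end

section
/- Let p be an odd prime. The map γ: ℤ/p² → ℤ/p², γ(x) = x − p·C(x,2) (where C(x,2) = x(x−1)/2 computed from any integer representative) is a group isomorphism from the adjoint group of the brace B^{p²} (operation x∘y = x + y + p·x·y) to the additive group ℤ/p². -/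
section SquareZero

variable {R : Type*} [CommRing R] {ε : R} {c : R → R}

theorem map_add_add_mul_of_sq_eq_zero (hε : ε ^ 2 = 0) (h2 : IsUnit (2 : R))
    (hc : ∀ x, 2 * c x = x * (x - 1)) (x y : R) :
    (x + y + ε * x * y) - ε * c (x + y + ε * x * y) = (x - ε * c x) + (y - ε * c y) :=
  h2.mul_left_cancel <| by
    linear_combination -ε * hc (x + y + ε * x * y) + ε * hc x + ε * hc y
      + (x * y - 2 * x * y * (x + y) - ε * x ^ 2 * y ^ 2) * hε

theorem injective_sub_mul_of_sq_eq_zero (hε : ε ^ 2 = 0) (h2 : IsUnit (2 : R))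
    (hc : ∀ x, 2 * c x = x * (x - 1)) : Function.Injective fun x => x - ε * c x := by
  intro a b h
  have h_twice : 2 * (a - b) = ε * ((a - b) * (a + b - 1)) := by
    linear_combination 2 * h + ε * hc a - ε * hc b
  have h_eps : ε * (a - b) = 0 := h2.mul_left_cancel <| by
    linear_combination ε * h_twice + (a - b) * (a + b - 1) * hε
  exact h2.mul_left_cancel <| by linear_combination h_twice + (a + b - 1) * h_eps

end SquareZero

theorem Nat.two_mul_cast_choose_two {R : Type*} [Ring R] (a : ℕ) :
    2 * (a.choose 2 : R) = a * (a - 1) := by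
  rw [← Nat.cast_descFactorial_two, Nat.descFactorial_eq_factorial_mul_choose, Nat.factorial_two]
  push_cast
  rfl

theorem ZMod.two_mul_cast_choose_val_two {n : ℕ} [NeZero n] (x : ZMod n) :
    2 * (x.val.choose 2 : ZMod n) = x * (x - 1) := by
  rw [Nat.two_mul_cast_choose_two, ZMod.natCast_zmod_val]

theorem ZMod.natCast_self_sq (p : ℕ) : (p : ZMod (p ^ 2)) ^ 2 = 0 := by
  exact_mod_cast ZMod.natCast_self (p ^ 2)

theorem ZMod.isUnit_two_of_odd {p : ℕ} (hp : Odd p) (k : ℕ) : IsUnit (2 : ZMod (p ^ k)) := by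
  exact_mod_cast (ZMod.isUnit_iff_coprime 2 (p ^ k)).mpr ((Nat.coprime_two_left.mpr hp).pow_right k)

/-- For odd p, γ(x) = x − p·C(x,2) is a group isomorphism from the adjoint
group of B^{p²} (operation x∘y = x+y+p·x·y) to the additive group ℤ/p². -/
theorem stmt_13 (p : ℕ) (hp : p.Prime) (hodd : p ≠ 2) :
    Function.Bijective
      (fun x : ZMod (p ^ 2) => x - (p : ZMod (p ^ 2)) * (Nat.choose x.val 2 : ZMod (p ^ 2))) ∧
    ∀ x y : ZMod (p ^ 2),
      (fun x : ZMod (p ^ 2) => x - (p : ZMod (p ^ 2)) * (Nat.choose x.val 2 : ZMod (p ^ 2)))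
          (x + y + (p : ZMod (p ^ 2)) * x * y)
        = (fun x : ZMod (p ^ 2) => x - (p : ZMod (p ^ 2)) * (Nat.choose x.val 2 : ZMod (p ^ 2))) x
          + (fun x : ZMod (p ^ 2) => x - (p : ZMod (p ^ 2)) * (Nat.choose x.val 2 : ZMod (p ^ 2))) y := by
  have : NeZero (p ^ 2) := ⟨pow_ne_zero 2 hp.ne_zero⟩
  have h2 := ZMod.isUnit_two_of_odd (hp.odd_of_ne_two hodd) 2
  have hε := ZMod.natCast_self_sq p
  have hc := ZMod.two_mul_cast_choose_val_two (n := p ^ 2)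
  exact ⟨Finite.injective_iff_bijective.mp (injective_sub_mul_of_sq_eq_zero hε h2 hc),
    map_add_add_mul_of_sq_eq_zero hε h2 hc⟩
end

section
/- Let A be a finite left brace whose additive group decomposes as A = B ⊕ C with B, C left ideals, and suppose C is an ideal contained in Soc(A). Then for a₁ = b₁ + c₁ and a₂ = b₂ + c₂ with bᵢ ∈ B, cᵢ ∈ C, one has a₁·a₂ = b₁·b₂ + b₁·c₂, where b₁·b₂ ∈ B and b₁·c₂ ∈ C; in particular A is isomorphic as a brace to the external semidirect product B ⋉ C. -/
namespace LeftBraceMul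

variable {A : Type*} [AddCommGroup A] (Br : LeftBraceMul A)

theorem mul_add_left_of_mul_eq_zero {c : A} (hc : ∀ a, Br.mul c a = 0) (b x : A) :
    Br.mul (b + c) x = Br.mul b x := by
  have h := Br.comp c b x
  rwa [hc, hc, hc, zero_add, zero_add, zero_add, add_comm c b] at h

end LeftBraceMul

theorem AddSubgroup.bijective_add_of_isCompl {A : Type*} [AddCommGroup A] {B C : AddSubgroup A}
    (hcompl : IsCompl B C) : Function.Bijective (fun w : B × C => (w.1 : A) + (w.2 : A)) := by
  refine ⟨AddSubgroup.add_injective_of_disjoint hcompl.disjoint, fun a => ?_⟩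
  obtain ⟨b, hb, c, hc, rfl⟩ := AddSubgroup.mem_sup.mp (hcompl.sup_eq_top ▸ AddSubgroup.mem_top a)
  exact ⟨(⟨b, hb⟩, ⟨c, hc⟩), rfl⟩

theorem stmt_18_general {A : Type*} [AddCommGroup A] (Br : LeftBraceMul A)
    (B C : AddSubgroup A)
    (hBleft : ∀ a : A, ∀ x ∈ B, Br.mul a x ∈ B)
    (hCleft : ∀ a : A, ∀ x ∈ C, Br.mul a x ∈ C)
    (hCsoc : ∀ x ∈ C, ∀ a : A, Br.mul x a = 0)
    (hcompl : IsCompl B C) :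
    (∀ b₁ ∈ B, ∀ c₁ ∈ C, ∀ b₂ ∈ B, ∀ c₂ ∈ C,
      Br.mul (b₁ + c₁) (b₂ + c₂) = Br.mul b₁ b₂ + Br.mul b₁ c₂ ∧
      Br.mul b₁ b₂ ∈ B ∧ Br.mul b₁ c₂ ∈ C) ∧
    Function.Bijective (fun w : B × C => (w.1 : A) + (w.2 : A)) := by
  refine ⟨fun b₁ _ c₁ hc₁ b₂ hb₂ c₂ hc₂ => ⟨?_, hBleft b₁ b₂ hb₂, hCleft b₁ c₂ hc₂⟩,
    AddSubgroup.bijective_add_of_isCompl hcompl⟩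
  rw [Br.mul_add_left_of_mul_eq_zero (hCsoc c₁ hc₁), Br.add_distrib]

/-- If A = B ⊕ C with B, C left ideals and C an ideal contained in the socle,
then (b₁+c₁)·(b₂+c₂) = b₁·b₂ + b₁·c₂ with b₁·b₂ ∈ B, b₁·c₂ ∈ C; in particular
A is the (internal = external) semidirect product B ⋉ C. -/
theorem stmt_18 {A : Type*} [AddCommGroup A] [Fintype A] (Br : LeftBraceMul A)
    (B C : AddSubgroup A)
    (hBleft : ∀ a : A, ∀ x ∈ B, Br.mul a x ∈ B)
    (hCleft : ∀ a : A, ∀ x ∈ C, Br.mul a x ∈ C)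
    (hCright : ∀ x ∈ C, ∀ a : A, Br.mul x a ∈ C)
    (hCsoc : ∀ x ∈ C, ∀ a : A, Br.mul x a = 0)
    (hcompl : IsCompl B C) :
    (∀ b₁ ∈ B, ∀ c₁ ∈ C, ∀ b₂ ∈ B, ∀ c₂ ∈ C,
      Br.mul (b₁ + c₁) (b₂ + c₂) = Br.mul b₁ b₂ + Br.mul b₁ c₂ ∧
      Br.mul b₁ b₂ ∈ B ∧ Br.mul b₁ c₂ ∈ C) ∧
    Function.Bijective (fun w : B × C => (w.1 : A) + (w.2 : A)) :=
  stmt_18_general Br B C hBleft hCleft hCsoc hcompl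
end
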